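/- Let T be a symmetric contraction defined on a closed subspace dom(T) of a complex Hilbert space H such that (I+T)dom(T) is dense in H. Then I+T is injective, the operator S = (I−T)(I+T)^{-1} with domain ran(I+T) is a positive, closed, densely defined symmetric operator on H, and the Cayley transform of S equals T. -/
import Mathlib


open scoped InnerProductSpace ComplexOrder
open Filter Topology

noncomputable section

variable {H : Type*} [NormedAddCommGroup H] [InnerProductSpace ℂ H] [CompleteSpace H]

set_option maxHeartbeats 1000000 in
/-- Let `T` be a symmetric contraction defined on a closed subspace `D = dom T` of a complex
Hilbert space `H` such that `(I+T) dom T` is dense in `H`. Then `I+T` is injective, the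
operator `S = (I−T)(I+T)⁻¹` with domain `ran (I+T)` is a positive, closed, densely defined
symmetric operator on `H`, and the Cayley transform of `S` equals `T`. -/
theorem statement4 (D : Submodule ℂ H) (hD : IsClosed (D : Set H)) (T : D →L[ℂ] H)
    (hcontr : ∀ ξ : D, ‖T ξ‖ ≤ ‖(ξ : H)‖)
    (hsymm : ∀ ξ η : D, ⟪T ξ, (η : H)⟫_ℂ = ⟪(ξ : H), T η⟫_ℂ)
    (hdense : Dense (Set.range fun ξ : D => (ξ : H) + T ξ)) :
    Function.Injective (fun ξ : D => (ξ : H) + T ξ) ∧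
    ∃ S : H →ₗ.[ℂ] H,
      (S.domain : Set H) = Set.range (fun ξ : D => (ξ : H) + T ξ) ∧
      (∀ ξ : D, ((ξ : H) + T ξ, (ξ : H) - T ξ) ∈ S.graph) ∧
      Dense (S.domain : Set H) ∧ S.IsClosed ∧
      (∀ h g : S.domain, ⟪S h, (g : H)⟫_ℂ = ⟪(h : H), S g⟫_ℂ) ∧
      (∀ h : S.domain, 0 ≤ ⟪S h, (h : H)⟫_ℂ) ∧
      Set.range (fun h : S.domain => (h : H) + S h) = (D : Set H) ∧
      ∀ (h : S.domain) (hm : (h : H) + S h ∈ D), T ⟨(h : H) + S h, hm⟩ = (h : H) - S h := by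
  haveI : CompleteSpace D := hD.completeSpace_coe
  set Lc : D →L[ℂ] H := D.subtypeL + T with hLc
  set Mc : D →L[ℂ] H := D.subtypeL - T with hMc
  have hLc_apply : ∀ ξ : D, Lc ξ = (ξ : H) + T ξ := fun ξ => rfl
  have hMc_apply : ∀ ξ : D, Mc ξ = (ξ : H) - T ξ := fun ξ => rfl
  set L : D →ₗ[ℂ] H := Lc.toLinearMap with hLdef
  -- injectivity
  have hinj : Function.Injective L := by
    rw [← LinearMap.ker_eq_bot, LinearMap.ker_eq_bot']
    intro ξ hξ
    have hξ' : (ξ : H) + T ξ = 0 := hξ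
    have horth : ∀ y ∈ Set.range fun η : D => (η : H) + T η, ⟪(ξ : H), y⟫_ℂ = 0 := by
      rintro y ⟨η, rfl⟩
      have key : ⟪(ξ : H), T η⟫_ℂ = ⟪T ξ, (η : H)⟫_ℂ := (hsymm ξ η).symm
      rw [inner_add_right, key, ← inner_add_left, hξ', inner_zero_left]
    have hall : ∀ y : H, ⟪(ξ : H), y⟫_ℂ = 0 := by
      intro y
      have hclosed : IsClosed {y : H | ⟪(ξ : H), y⟫_ℂ = 0} :=
        isClosed_eq (continuous_const.inner continuous_id) continuous_const
      exact hclosed.closure_subset_iff.mpr horth (hdense y)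
    have : (ξ : H) = 0 := by
      have := hall (ξ : H); rwa [inner_self_eq_zero] at this
    exact Subtype.ext this
  set e : D ≃ₗ[ℂ] LinearMap.range L := LinearEquiv.ofInjective L hinj with hedef
  set S : H →ₗ.[ℂ] H := ⟨LinearMap.range L, Mc.toLinearMap ∘ₗ e.symm.toLinearMap⟩ with hSdef
  have hmemL : ∀ ξ : D, (ξ : H) + T ξ ∈ S.domain := fun ξ => ⟨ξ, rfl⟩
  have hS_apply : ∀ ξ : D, S ⟨(ξ : H) + T ξ, hmemL ξ⟩ = (ξ : H) - T ξ := by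
    intro ξ
    have h1 : e.symm ⟨(ξ : H) + T ξ, hmemL ξ⟩ = ξ := by
      apply e.injective
      rw [e.apply_symm_apply]
      exact Subtype.ext (by simp [hedef]; rfl)
    show Mc (e.symm _) = _
    rw [h1, hMc_apply]
  have hsurj : ∀ h : S.domain, ∃ ξ : D, (ξ : H) + T ξ = (h : H) ∧ S h = (ξ : H) - T ξ := by
    intro h
    obtain ⟨ξ, hξ⟩ := h.2
    refine ⟨ξ, hξ, ?_⟩
    have heq : h = ⟨(ξ : H) + T ξ, hmemL ξ⟩ := Subtype.ext hξ.symm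
    rw [heq, hS_apply]
  have hdomset : (S.domain : Set H) = Set.range (fun ξ : D => (ξ : H) + T ξ) := by
    ext x
    constructor
    · intro hx; obtain ⟨ξ, hξ⟩ := hx; exact ⟨ξ, hξ⟩
    · rintro ⟨ξ, rfl⟩; exact hmemL ξ
  have hgraphmem : ∀ ξ : D, ((ξ : H) + T ξ, (ξ : H) - T ξ) ∈ S.graph := by
    intro ξ
    have := S.mem_graph ⟨(ξ : H) + T ξ, hmemL ξ⟩
    rwa [hS_apply] at this
  have hinj' : Function.Injective (fun ξ : D => (ξ : H) + T ξ) := hinj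
  clear hSdef hedef hLdef
  clear_value S e L
  refine ⟨hinj', S, hdomset, hgraphmem, ?_, ?_, ?_, ?_, ?_, ?_⟩
  · rw [hdomset]; exact hdense
  · -- closedness
    set Ψ : D →L[ℂ] H × H := Lc.prod Mc with hΨdef
    have hbd : ∀ ξ : D, ‖ξ‖ ≤ ((1 : NNReal) : ℝ) * ‖Ψ ξ‖ := by
      intro ξ
      have h2 : (2 : ℝ) * ‖ξ‖ ≤ ‖Lc ξ‖ + ‖Mc ξ‖ := by
        have : Lc ξ + Mc ξ = (ξ : H) + (ξ : H) := by
          rw [hLc_apply, hMc_apply]; abel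
        calc (2 : ℝ) * ‖ξ‖ = ‖(ξ : H) + (ξ : H)‖ := by
              rw [← two_smul ℝ ((ξ : H))]
              simp [norm_smul]
          _ = ‖Lc ξ + Mc ξ‖ := by rw [this]
          _ ≤ ‖Lc ξ‖ + ‖Mc ξ‖ := norm_add_le _ _
      have hmax : ‖Lc ξ‖ + ‖Mc ξ‖ ≤ 2 * max ‖Lc ξ‖ ‖Mc ξ‖ := by
        have := le_max_left ‖Lc ξ‖ ‖Mc ξ‖
        have := le_max_right ‖Lc ξ‖ ‖Mc ξ‖
        linarith
      have hn : ‖Ψ ξ‖ = max ‖Lc ξ‖ ‖Mc ξ‖ := rfl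
      rw [NNReal.coe_one, one_mul, hn]
      linarith
    have hanti : AntilipschitzWith 1 Ψ := Ψ.antilipschitz_of_bound hbd
    have hrange : IsClosed (Set.range Ψ) := hanti.isClosed_range Ψ.uniformContinuous
    have hgr : (S.graph : Set (H × H)) = Set.range Ψ := by
      ext p
      constructor
      · intro hp
        have hp' : p ∈ S.graph := hp
        rw [LinearPMap.mem_graph_iff] at hp'
        obtain ⟨x, hx1, hx2⟩ := hp'
        obtain ⟨ξ, hξ1, hξ2⟩ := hsurj x
        refine ⟨ξ, ?_⟩
        have : Ψ ξ = ((ξ : H) + T ξ, (ξ : H) - T ξ) := rfl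
        rw [this, hξ1, ← hξ2, hx1, hx2]
      · rintro ⟨ξ, rfl⟩
        exact hgraphmem ξ
    show IsClosed (S.graph : Set (H × H))
    rw [hgr]; exact hrange
  · -- symmetry
    intro h g
    obtain ⟨ξ, hξ1, hξ2⟩ := hsurj h
    obtain ⟨η, hη1, hη2⟩ := hsurj g
    rw [hξ2, hη2, ← hξ1, ← hη1]
    simp only [inner_sub_left, inner_add_left, inner_sub_right, inner_add_right]
    rw [← hsymm ξ η]
    ring
  · -- positivity
    intro h
    obtain ⟨ξ, hξ1, hξ2⟩ := hsurj h
    rw [hξ2, ← hξ1]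
    have : ⟪(ξ : H) - T ξ, (ξ : H) + T ξ⟫_ℂ = ((‖(ξ : H)‖ ^ 2 - ‖T ξ‖ ^ 2 : ℝ) : ℂ) := by
      simp only [inner_sub_left, inner_add_right]
      rw [hsymm ξ ξ, inner_self_eq_norm_sq_to_K, inner_self_eq_norm_sq_to_K]
      push_cast
      ring_nf
      norm_num [RCLike.ofReal_alg, Complex.coe_algebraMap, Complex.real_smul]
    rw [this]
    have hle : ‖T ξ‖ ^ 2 ≤ ‖(ξ : H)‖ ^ 2 := by
      have := hcontr ξ
      nlinarith [norm_nonneg (T ξ)]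
    have : (0 : ℝ) ≤ ‖(ξ : H)‖ ^ 2 - ‖T ξ‖ ^ 2 := by linarith
    exact_mod_cast Complex.zero_le_real.mpr this
  · -- range (I + S) = D
    ext x
    constructor
    · rintro ⟨h, rfl⟩
      obtain ⟨ξ, hξ1, hξ2⟩ := hsurj h
      have : (h : H) + S h = (ξ : H) + (ξ : H) := by rw [hξ2, ← hξ1]; abel
      show (h : H) + S h ∈ (D : Set H)
      rw [this]
      exact D.add_mem ξ.2 ξ.2
    · intro hx
      set ζ : D := ((2 : ℂ)⁻¹) • ⟨x, hx⟩ with hζdef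
      refine ⟨⟨(ζ : H) + T ζ, hmemL ζ⟩, ?_⟩
      show ((ζ : H) + T ζ) + S ⟨(ζ : H) + T ζ, hmemL ζ⟩ = x
      rw [hS_apply]
      have : (ζ : H) = (2 : ℂ)⁻¹ • x := rfl
      rw [show ((ζ : H) + T ζ) + ((ζ : H) - T ζ) = (ζ : H) + (ζ : H) by abel, this]
      module
  · -- Cayley transform is T
    intro h hm
    obtain ⟨ξ, hξ1, hξ2⟩ := hsurj h
    have hval : ((⟨(h : H) + S h, hm⟩ : D) : H) = ((ξ + ξ : D) : H) := by
      push_cast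
      rw [hξ2, ← hξ1]
      abel
    have h2 : T (⟨(h : H) + S h, hm⟩ : D) = T (ξ + ξ) := by
      congr 1
      exact Subtype.ext hval
    rw [h2, map_add, hξ2, ← hξ1]
    abel
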